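/- Let S = (N, M0) be a live augmented marked graph in which every minimal siphon induces a conservative P-subnet. Then for every potentially reachable marking M ∈ PR(S), the system (N, M) is live; in particular S is strongly live. -/

import Mathlib

open scoped Classical

structure PetriNet (P T : Type) where
  pre : P → T → ℕ
  post : T → P → ℕ

namespace PetriNet

variable {P T : Type}

def enabled (N : PetriNet P T) (M : P → ℕ) (t : T) : Prop :=
  ∀ p, N.pre p t ≤ M p

def fire (N : PetriNet P T) (M : P → ℕ) (t : T) : P → ℕ :=
  fun p => M p - N.pre p t + N.post t p

def feasible (N : PetriNet P T) : (P → ℕ) → List T → (P → ℕ) → Prop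
  | M, [], M' => M' = M
  | M, t :: σ, M' => N.enabled M t ∧ feasible N (N.fire M t) σ M'

def reachable (N : PetriNet P T) (M0 M : P → ℕ) : Prop :=
  ∃ σ : List T, N.feasible M0 σ M

def inc (N : PetriNet P T) (p : P) (t : T) : ℤ :=
  (N.post t p : ℤ) - (N.pre p t : ℤ)

def potReach [Fintype T] (N : PetriNet P T) (M0 M : P → ℕ) : Prop :=
  ∃ Y : T → ℕ, ∀ p, (M p : ℤ) = (M0 p : ℤ) + ∑ t, N.inc p t * (Y t : ℤ)

def live (N : PetriNet P T) (M0 : P → ℕ) : Prop :=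
  ∀ (t : T) (M : P → ℕ), N.reachable M0 M →
    ∃ M', N.reachable M M' ∧ N.enabled M' t

def bounded (N : PetriNet P T) (M0 : P → ℕ) : Prop :=
  ∃ k : ℕ, ∀ M : P → ℕ, N.reachable M0 M → ∀ p, M p ≤ k

def reversible (N : PetriNet P T) (M0 : P → ℕ) : Prop :=
  ∀ M : P → ℕ, N.reachable M0 M → N.reachable M M0

def rev (N : PetriNet P T) : PetriNet P T :=
  ⟨fun p t => N.post t p, fun t p => N.pre p t⟩

def propR (N : PetriNet P T) (M0 : P → ℕ) : Prop :=
  N.reversible M0 ∧ N.rev.reversible M0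

def placePre [Fintype T] (N : PetriNet P T) (p : P) : Finset T :=
  Finset.univ.filter fun t => 0 < N.post t p

def placePost [Fintype T] (N : PetriNet P T) (p : P) : Finset T :=
  Finset.univ.filter fun t => 0 < N.pre p t

def transPre [Fintype P] (N : PetriNet P T) (t : T) : Finset P :=
  Finset.univ.filter fun p => 0 < N.pre p t

def transPost [Fintype P] (N : PetriNet P T) (t : T) : Finset P :=
  Finset.univ.filter fun p => 0 < N.post t p

def arc (N : PetriNet P T) : (P ⊕ T) → (P ⊕ T) → Prop
  | Sum.inl p, Sum.inr t => 0 < N.pre p t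
  | Sum.inr t, Sum.inl p => 0 < N.post t p
  | _, _ => False

def stronglyConnected (N : PetriNet P T) : Prop :=
  ∀ x y : P ⊕ T, Relation.ReflTransGen N.arc x y

def connectedNet (N : PetriNet P T) : Prop :=
  ∀ x y : P ⊕ T, Relation.ReflTransGen (fun a b => N.arc a b ∨ N.arc b a) x y

def ordinary (N : PetriNet P T) : Prop :=
  ∀ p t, N.pre p t ≤ 1 ∧ N.post t p ≤ 1

def isWMGle [Fintype T] (N : PetriNet P T) : Prop :=
  ∀ p, (N.placePre p).card ≤ 1 ∧ (N.placePost p).card ≤ 1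

def deadlock (N : PetriNet P T) (M : P → ℕ) : Prop :=
  ∀ t, ¬ N.enabled M t

end PetriNet


namespace PetriNet

variable {Q T : Type}

/-- The net obtained by removing the places of `R` together with their adjacent arcs. -/
def delPlaces (N : PetriNet Q T) (R : Finset Q) : PetriNet {p : Q // p ∉ R} T :=
  ⟨fun p t => N.pre p.1 t, fun t p => N.post t p.1⟩

/-- A marked graph: ordinary, and every place has exactly one input and one output
transition. -/
def isMarkedGraph {P : Type} [Fintype T] (N : PetriNet P T) : Prop :=
  N.ordinary ∧ ∀ p, (N.placePre p).card = 1 ∧ (N.placePost p).card = 1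

/-- An elementary directed path from node `x` to node `y`. -/
def elemPath {P : Type} (N : PetriNet P T) (x y : P ⊕ T) : Prop :=
  ∃ l : List (P ⊕ T), l.Chain' N.arc ∧ l.head? = some x ∧ l.getLast? = some y ∧ l.Nodup

/-- An elementary directed path from `x` to `y`, none of whose places is marked by `M`. -/
def elemPathUnmarked {P : Type} (N : PetriNet P T) (M : P → ℕ) (x y : P ⊕ T) : Prop :=
  ∃ l : List (P ⊕ T), l.Chain' N.arc ∧ l.head? = some x ∧ l.getLast? = some y ∧ l.Nodup ∧
    ∀ p : P, Sum.inl p ∈ l → M p = 0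

/-- `l` lists the nodes (each exactly once) of an elementary circuit. -/
def isElemCircuit {P : Type} (N : PetriNet P T) : List (P ⊕ T) → Prop
  | [] => False
  | x :: xs => (x :: xs).Nodup ∧ List.Chain N.arc x (xs ++ [x])

/-- Augmented marked graph with resource places `R`. -/
def isAMG [Fintype Q] [Fintype T] (N : PetriNet Q T) (M0 : Q → ℕ) (R : Finset Q) : Prop :=
  -- ordinary net
  N.ordinary ∧
  -- (H1) removing the resource places yields a marked graph
  isMarkedGraph (N.delPlaces R) ∧
  -- (H2) and paths of (H4)
  (∀ r ∈ R, ∃ D : Finset (T × T),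
    2 ≤ D.card ∧
    Set.InjOn Prod.fst (↑D : Set (T × T)) ∧
    Set.InjOn Prod.snd (↑D : Set (T × T)) ∧
    (∀ t : T, 0 < N.pre r t ↔ ∃ ab ∈ D, ab.1 = t) ∧
    (∀ t : T, 0 < N.post t r ↔ ∃ ab ∈ D, ab.2 = t) ∧
    (∀ ab ∈ D, ab.1 ≠ ab.2 →
      elemPath (N.delPlaces R) (Sum.inr ab.1) (Sum.inr ab.2)) ∧
    (∀ ab ∈ D, ab.1 ≠ ab.2 →
      elemPathUnmarked (N.delPlaces R) (fun p => M0 p.1) (Sum.inr ab.1) (Sum.inr ab.2))) ∧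
  -- (H3) each elementary circuit of the underlying marked graph is marked
  (∀ l : List ({p : Q // p ∉ R} ⊕ T), isElemCircuit (N.delPlaces R) l →
    ∃ p : {p : Q // p ∉ R}, Sum.inl p ∈ l ∧ 0 < M0 p.1) ∧
  -- (H4) each resource place is initially marked
  (∀ r ∈ R, 0 < M0 r)

end PetriNet

namespace PetriNet

variable {P T : Type}

def isSiphon (N : PetriNet P T) (D : Finset P) : Prop :=
  ∀ t, (∃ p ∈ D, 0 < N.post t p) → ∃ p ∈ D, 0 < N.pre p t

def isTrap (N : PetriNet P T) (D : Finset P) : Prop :=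
  ∀ t, (∃ p ∈ D, 0 < N.pre p t) → ∃ p ∈ D, 0 < N.post t p

def isMinSiphon (N : PetriNet P T) (D : Finset P) : Prop :=
  D.Nonempty ∧ N.isSiphon D ∧ ∀ D' : Finset P, D' ⊂ D → N.isSiphon D' → D' = ∅

def isMinTrap (N : PetriNet P T) (D : Finset P) : Prop :=
  D.Nonempty ∧ N.isTrap D ∧ ∀ D' : Finset P, D' ⊂ D → N.isTrap D' → D' = ∅

/-- The P-subnet induced by `D` is conservative. -/
def inducedConservative [Fintype T] (N : PetriNet P T) (D : Finset P) : Prop :=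
  ∃ X : P → ℕ, (∀ p ∈ D, 1 ≤ X p) ∧
    ∀ t : T, (∃ p ∈ D, 0 < N.pre p t ∨ 0 < N.post t p) →
      (∑ p ∈ D, (X p : ℤ) * N.inc p t) = 0

end PetriNet


/-!
The all-ones vector is a T-invariant of an augmented marked graph, so every `M ∈ PR(S)`
satisfies a state equation `M0 = M + I·W` with `W ≥ 0`. Such a plan `W` can be executed
transition by transition, leading from `M` back to `M0`. Otherwise, at a marking where no
transition of the plan is enabled, the empty input places of plan transitions, closed under
passing to empty output places of transitions with such an input, form a siphon. At a resource
place this uses the unmarked paths of (H4), along which the state equation forces every place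
to be empty. This siphon contains a minimal siphon, whose weighted token count is invariant on
`PR(S)` by conservativeness and positive by liveness, a contradiction. Hence every marking of
`PR(S)` reaches `M0`, and the liveness of `S` transfers to `(N, M)`.
-/

namespace PetriNet

variable {P T : Type}

section Firing

variable {N : PetriNet P T}

theorem feasible_append {M M₁ M₂ : P → ℕ} {σ₁ σ₂ : List T}
    (h₁ : N.feasible M σ₁ M₁) (h₂ : N.feasible M₁ σ₂ M₂) : N.feasible M (σ₁ ++ σ₂) M₂ := by
  induction σ₁ generalizing M with
  | nil =>
    obtain rfl : M₁ = M := h₁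
    exact h₂
  | cons t σ ih => exact ⟨h₁.1, ih h₁.2⟩

theorem reachable_refl (M : P → ℕ) : N.reachable M M :=
  ⟨[], rfl⟩

theorem reachable_trans {M M₁ M₂ : P → ℕ} (h₁ : N.reachable M M₁) (h₂ : N.reachable M₁ M₂) :
    N.reachable M M₂ := by
  obtain ⟨σ₁, h₁⟩ := h₁
  obtain ⟨σ₂, h₂⟩ := h₂
  exact ⟨σ₁ ++ σ₂, feasible_append h₁ h₂⟩

theorem fire_cast {M : P → ℕ} {t : T} (h : N.enabled M t) (p : P) :
    (N.fire M t p : ℤ) = M p + N.inc p t := by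
  simp only [fire, inc]
  push_cast [Nat.cast_sub (h p)]
  ring

theorem mem_placePre [Fintype T] {p : P} {t : T} : t ∈ N.placePre p ↔ 0 < N.post t p := by
  simp [placePre]

theorem mem_placePost [Fintype T] {p : P} {t : T} : t ∈ N.placePost p ↔ 0 < N.pre p t := by
  simp [placePost]

end Firing

section StateEquation

variable [Fintype T] {N : PetriNet P T}

/-- `N.potReach M M'` unfolds to `∃ Y, N.StateEq M Y M'`. -/
def StateEq (N : PetriNet P T) (M : P → ℕ) (Y : T → ℕ) (M' : P → ℕ) : Prop :=
  ∀ p, (M' p : ℤ) = (M p : ℤ) + ∑ t, N.inc p t * (Y t : ℤ)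

theorem stateEq_zero_iff {M M' : P → ℕ} : N.StateEq M 0 M' ↔ M' = M := by
  simp [StateEq, funext_iff]

theorem StateEq.add {M M₁ M₂ : P → ℕ} {Y₁ Y₂ : T → ℕ}
    (h₁ : N.StateEq M Y₁ M₁) (h₂ : N.StateEq M₁ Y₂ M₂) : N.StateEq M (Y₁ + Y₂) M₂ := fun p => by
  simp only [h₂ p, h₁ p, Pi.add_apply, Nat.cast_add, mul_add, Finset.sum_add_distrib]
  ring

theorem StateEq.cancel_left {M M₁ M₂ : P → ℕ} {Y₁ Y₂ : T → ℕ}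
    (h : N.StateEq M (Y₁ + Y₂) M₂) (h₁ : N.StateEq M Y₁ M₁) : N.StateEq M₁ Y₂ M₂ := fun p => by
  have hp := h p
  simp only [Pi.add_apply, Nat.cast_add, mul_add, Finset.sum_add_distrib] at hp
  rw [h₁ p]
  linarith

theorem stateEq_fire {M : P → ℕ} {t : T} (h : N.enabled M t) :
    N.StateEq M (Pi.single t 1) (N.fire M t) := fun p => by
  rw [fire_cast h]
  simp [Pi.single_apply]

theorem stateEq_of_feasible {M M' : P → ℕ} {σ : List T} (h : N.feasible M σ M') :
    ∃ Y, N.StateEq M Y M' := by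
  induction σ generalizing M with
  | nil =>
    obtain rfl : M' = M := h
    exact ⟨0, stateEq_zero_iff.2 rfl⟩
  | cons t σ ih =>
    obtain ⟨Y, hY⟩ := ih h.2
    exact ⟨_, (stateEq_fire h.1).add hY⟩

theorem potReach_of_reachable {M M' : P → ℕ} (h : N.reachable M M') : N.potReach M M' :=
  let ⟨_, hσ⟩ := h
  stateEq_of_feasible hσ

theorem potReach_trans {M M₁ M₂ : P → ℕ} (h₁ : N.potReach M M₁) (h₂ : N.potReach M₁ M₂) :
    N.potReach M M₂ := by
  obtain ⟨Y₁, h₁⟩ := h₁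
  obtain ⟨Y₂, h₂⟩ := h₂
  exact ⟨_, StateEq.add h₁ h₂⟩

theorem sum_inc_mul_of_ordinary (hN : N.ordinary) (p : P) (Y : T → ℕ) :
    ∑ t, N.inc p t * (Y t : ℤ) =
      ((∑ t ∈ N.placePre p, Y t : ℕ) : ℤ) - ((∑ t ∈ N.placePost p, Y t : ℕ) : ℤ) := by
  simp only [placePre, placePost, Finset.sum_filter, Nat.cast_sum, ← Finset.sum_sub_distrib]
  refine Finset.sum_congr rfl fun t _ => ?_
  obtain ⟨hpre, hpost⟩ := hN p t
  obtain h | h : N.pre p t = 0 ∨ N.pre p t = 1 := by omega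
  all_goals obtain h' | h' : N.post t p = 0 ∨ N.post t p = 1 := by omega
  all_goals simp [inc, h, h']

end StateEquation

section Siphons

theorem exists_isMinSiphon_subset [Finite P] {N : PetriNet P T} {D : Finset P} (hne : D.Nonempty)
    (hD : N.isSiphon D) : ∃ D' ⊆ D, N.isMinSiphon D' := by
  obtain ⟨D', hD'D, hmin⟩ :=
    Finite.exists_le_minimal (p := fun D : Finset P => D.Nonempty ∧ N.isSiphon D) ⟨hne, hD⟩
  refine ⟨D', hD'D, hmin.1.1, hmin.1.2, fun D'' hlt hD'' => ?_⟩
  by_contra hne''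
  exact hlt.not_superset (hmin.2 ⟨Finset.nonempty_iff_ne_empty.2 hne'', hD''⟩ hlt.subset)

variable [Fintype T] {N : PetriNet P T}

theorem StateEq.sum_mul_eq {M M' : P → ℕ} {Y : T → ℕ} (h : N.StateEq M Y M')
    {D : Finset P} {X : P → ℕ} (hX : ∀ t : T, (∃ p ∈ D, 0 < N.pre p t ∨ 0 < N.post t p) →
      ∑ p ∈ D, (X p : ℤ) * N.inc p t = 0) :
    ∑ p ∈ D, (X p : ℤ) * M' p = ∑ p ∈ D, (X p : ℤ) * M p := by
  have hX' : ∀ t, ∑ p ∈ D, (X p : ℤ) * N.inc p t = 0 := by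
    intro t
    by_cases ht : ∃ p ∈ D, 0 < N.pre p t ∨ 0 < N.post t p
    · exact hX t ht
    · refine Finset.sum_eq_zero fun p hp => ?_
      have hpre : N.pre p t = 0 := by by_contra h; exact ht ⟨p, hp, .inl (by omega)⟩
      have hpost : N.post t p = 0 := by by_contra h; exact ht ⟨p, hp, .inr (by omega)⟩
      simp [inc, hpre, hpost]
  simp only [h _, mul_add, Finset.sum_add_distrib, Finset.mul_sum, add_eq_left]
  rw [Finset.sum_comm]
  refine Finset.sum_eq_zero fun t _ => ?_
  simp only [← mul_assoc, ← Finset.sum_mul, hX' t, zero_mul]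

theorem inducedConservative.exists_pos_of_potReach {D : Finset P}
    (hD : N.inducedConservative D) {M0 M₁ M₂ : P → ℕ}
    (h₁ : N.potReach M0 M₁) (h₂ : N.potReach M0 M₂) (hM₁ : ∃ p ∈ D, 0 < M₁ p) :
    ∃ p ∈ D, 0 < M₂ p := by
  obtain ⟨X, hXpos, hX⟩ := hD
  obtain ⟨p₁, hp₁, hM₁p₁⟩ := hM₁
  by_contra! hM₂
  have hzero : ∑ p ∈ D, (X p : ℤ) * M₂ p = 0 :=
    Finset.sum_eq_zero fun p hp => by simp [Nat.le_zero.1 (hM₂ p hp)]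
  have hpos : (X p₁ : ℤ) * M₁ p₁ ≤ ∑ p ∈ D, (X p : ℤ) * M₁ p :=
    Finset.single_le_sum (f := fun p => (X p : ℤ) * M₁ p) (fun _ _ => by positivity) hp₁
  have h1 : (1 : ℤ) ≤ (X p₁ : ℤ) * M₁ p₁ := one_le_mul_of_one_le_of_one_le
    (by exact_mod_cast hXpos p₁ hp₁) (by exact_mod_cast hM₁p₁)
  obtain ⟨_, h₁ : N.StateEq M0 _ M₁⟩ := h₁
  obtain ⟨_, h₂ : N.StateEq M0 _ M₂⟩ := h₂
  rw [h₁.sum_mul_eq hX] at hpos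
  rw [h₂.sum_mul_eq hX] at hzero
  omega

end Siphons

inductive Blocked (N : PetriNet P T) (M : P → ℕ) (Y : T → ℕ) : P → Prop
  | input {p : P} {t : T} : 0 < Y t → 0 < N.pre p t → M p = 0 → Blocked N M Y p
  | succ {p q : P} {t : T} :
      Blocked N M Y p → 0 < N.pre p t → 0 < N.post t q → M q = 0 → Blocked N M Y q

section Blocked

variable {N : PetriNet P T} {M : P → ℕ} {Y : T → ℕ}

theorem Blocked.eq_zero {p : P} (h : N.Blocked M Y p) : M p = 0 := by
  cases h <;> assumption

theorem exists_blocked_input (hN : N.ordinary) {t : T} (hYt : 0 < Y t)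
    (ht : ¬ N.enabled M t) : ∃ p, N.Blocked M Y p ∧ 0 < N.pre p t := by
  simp only [enabled, not_forall, not_le] at ht
  obtain ⟨p, hp⟩ := ht
  have hMp : M p = 0 := by have := (hN p t).1; omega
  exact ⟨p, .input hYt (by omega) hMp, by omega⟩

theorem exists_blocked_input_of_path {R : Finset P} {l : List ({p : P // p ∉ R} ⊕ T)}
    {a b : T} (hl : l.IsChain (N.delPlaces R).arc) (hhead : l.head? = some (Sum.inr a))
    (hlast : l.getLast? = some (Sum.inr b)) (hempty : ∀ q, Sum.inl q ∈ l → M q.1 = 0)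
    (ha : ∃ p, N.Blocked M Y p ∧ 0 < N.pre p a) : ∃ p, N.Blocked M Y p ∧ 0 < N.pre p b := by
  let feeds : {p : P // p ∉ R} ⊕ T → Prop :=
    Sum.elim (fun q => N.Blocked M Y q.1) (fun t => ∃ p, N.Blocked M Y p ∧ 0 < N.pre p t)
  refine (List.IsChain.iff_mem.1 hl).induction feeds l ?_ ?_ _ (List.mem_of_getLast? hlast)
  · rintro (q | t) (q' | t') ⟨-, hy, hxy⟩ hx
    · exact hxy.elim
    · exact ⟨q.1, hx, hxy⟩
    · obtain ⟨p, hp, hpt⟩ := hx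
      exact .succ hp hpt hxy (hempty q' hy)
    · exact hxy.elim
  · intro hne
    rw [List.head?_eq_some_head hne, Option.some_inj] at hhead
    exact hhead ▸ ha

end Blocked

section AugmentedMarkedGraph

variable [Fintype P] [Fintype T] {N : PetriNet P T} {M0 : P → ℕ} {R : Finset P}

theorem isAMG.card_placePre_of_not_mem (hAMG : N.isAMG M0 R) {p : P} (hp : p ∉ R) :
    (N.placePre p).card = 1 :=
  (hAMG.2.1.2 ⟨p, hp⟩).1

theorem isAMG.card_placePost_of_not_mem (hAMG : N.isAMG M0 R) {p : P} (hp : p ∉ R) :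
    (N.placePost p).card = 1 :=
  (hAMG.2.1.2 ⟨p, hp⟩).2

theorem isAMG.placePre_eq_singleton (hAMG : N.isAMG M0 R) {p : P} (hp : p ∉ R) {t : T}
    (ht : 0 < N.post t p) : N.placePre p = {t} :=
  Finset.eq_singleton_iff_unique_mem.2 ⟨mem_placePre.2 ht, fun _ ht' =>
    Finset.card_le_one.1 (hAMG.card_placePre_of_not_mem hp).le _ ht' _ (mem_placePre.2 ht)⟩

theorem isAMG.placePost_eq_singleton (hAMG : N.isAMG M0 R) {p : P} (hp : p ∉ R) {t : T}
    (ht : 0 < N.pre p t) : N.placePost p = {t} :=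
  Finset.eq_singleton_iff_unique_mem.2 ⟨mem_placePost.2 ht, fun _ ht' =>
    Finset.card_le_one.1 (hAMG.card_placePost_of_not_mem hp).le _ ht' _ (mem_placePost.2 ht)⟩

theorem isAMG.exists_consumer (hAMG : N.isAMG M0 R) (p : P) : ∃ t, 0 < N.pre p t := by
  by_cases hp : p ∈ R
  · obtain ⟨D, hcard, -, -, hpre, -⟩ := hAMG.2.2.1 p hp
    obtain ⟨ab, hab⟩ := Finset.card_pos.1 (by omega : 0 < D.card)
    exact ⟨ab.1, (hpre ab.1).2 ⟨ab, hab, rfl⟩⟩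
  · obtain ⟨t, ht⟩ := Finset.card_pos.1 (hAMG.card_placePost_of_not_mem hp ▸ Nat.one_pos)
    exact ⟨t, mem_placePost.1 ht⟩

theorem isAMG.card_placePre_eq_card_placePost (hAMG : N.isAMG M0 R) (p : P) :
    (N.placePre p).card = (N.placePost p).card := by
  by_cases hp : p ∈ R
  · obtain ⟨D, -, hfst, hsnd, hpre, hpost, -⟩ := hAMG.2.2.1 p hp
    have hPre : N.placePre p = D.image Prod.snd := by
      ext t
      simp [mem_placePre, hpost]
    have hPost : N.placePost p = D.image Prod.fst := by
      ext t
      simp [mem_placePost, hpre]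
    rw [hPre, hPost, Finset.card_image_of_injOn hfst, Finset.card_image_of_injOn hsnd]
  · rw [hAMG.card_placePre_of_not_mem hp, hAMG.card_placePost_of_not_mem hp]

theorem isAMG.sum_inc_eq_zero (hAMG : N.isAMG M0 R) (p : P) : ∑ t, N.inc p t = 0 := by
  have h := sum_inc_mul_of_ordinary hAMG.1 p 1
  simp only [Pi.one_apply, Nat.cast_one, mul_one, Finset.sum_const, smul_eq_mul] at h
  rw [h, hAMG.card_placePre_eq_card_placePost p, sub_self]

theorem isAMG.sum_inc_mul_of_not_mem (hAMG : N.isAMG M0 R) {p : P} (hp : p ∉ R) {t : T}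
    (ht : 0 < N.pre p t) (Y : T → ℕ) :
    ∑ t', N.inc p t' * (Y t' : ℤ) = ((∑ t' ∈ N.placePre p, Y t' : ℕ) : ℤ) - Y t := by
  rw [sum_inc_mul_of_ordinary hAMG.1, hAMG.placePost_eq_singleton hp ht, Finset.sum_singleton]

variable {M : P → ℕ} {Y : T → ℕ}

theorem isAMG.empty_of_unmarkedPath (hAMG : N.isAMG M0 R) (hbal : N.StateEq M Y M0)
    {l : List ({p : P // p ∉ R} ⊕ T)} {b : T} (hl : l.IsChain (N.delPlaces R).arc)
    (hlast : l.getLast? = some (Sum.inr b)) (hb : Y b = 0)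
    (hunm : ∀ q, Sum.inl q ∈ l → M0 q.1 = 0) : ∀ q, Sum.inl q ∈ l → M q.1 = 0 := by
  -- going backwards, the state equation at each place forces its producer out of the plan
  let idle : {p : P // p ∉ R} ⊕ T → Prop :=
    Sum.elim (fun q => M q.1 = 0 ∧ ∀ t ∈ N.placePre q.1, Y t = 0) (fun t => Y t = 0)
  have key := (List.IsChain.iff_mem.1 hl).backwards_induction idle l ?_ ?_
  · exact fun q hq => (key _ hq).1
  · rintro (q | t) (q' | t') ⟨hx, -, hxy⟩ hy
    · exact hxy.elim
    · have h := hbal q.1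
      rw [hAMG.sum_inc_mul_of_not_mem q.2 hxy, hunm q hx] at h
      have hY : Y t' = 0 := hy
      have hM : M q.1 = 0 ∧ ∑ t ∈ N.placePre q.1, Y t = 0 := by omega
      exact ⟨hM.1, Finset.sum_eq_zero_iff.1 hM.2⟩
    · exact hy.2 t (mem_placePre.2 hxy)
    · exact hxy.elim
  · intro hne
    rw [List.getLast?_eq_some_getLast hne, Option.some_inj] at hlast
    exact hlast ▸ hb

theorem isAMG.exists_blocked_input_of_resource (hAMG : N.isAMG M0 R) (hbal : N.StateEq M Y M0)
    {r : P} (hr : r ∈ R) (hrb : N.Blocked M Y r) {t : T} (ht : 0 < N.post t r) (hYt : Y t = 0) :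
    ∃ p, N.Blocked M Y p ∧ 0 < N.pre p t := by
  obtain ⟨D, -, -, -, hpre, hpost, -, hpath⟩ := hAMG.2.2.1 r hr
  obtain ⟨⟨a, b⟩, hab, rfl : b = t⟩ := (hpost t).1 ht
  have hra : 0 < N.pre r a := (hpre a).2 ⟨_, hab, rfl⟩
  by_cases hba : a = b
  · exact ⟨r, hrb, hba ▸ hra⟩
  obtain ⟨l, hl, hhead, hlast, -, hunm⟩ := hpath _ hab hba
  exact exists_blocked_input_of_path hl hhead hlast
    (hAMG.empty_of_unmarkedPath hbal hl hlast hYt hunm) ⟨r, hrb, hra⟩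

theorem isAMG.isSiphon_blocked (hAMG : N.isAMG M0 R) (hbal : N.StateEq M Y M0)
    (hstuck : ∀ t, 0 < Y t → ¬ N.enabled M t) :
    N.isSiphon (Finset.univ.filter (N.Blocked M Y)) := by
  rintro t ⟨p, hp, hpt⟩
  simp only [Finset.mem_filter, Finset.mem_univ, true_and] at hp ⊢
  by_cases hYt : 0 < Y t
  · exact exists_blocked_input hAMG.1 hYt (hstuck t hYt)
  replace hYt : Y t = 0 := by omega
  by_cases hpR : p ∈ R
  · exact hAMG.exists_blocked_input_of_resource hbal hpR hp hpt hYt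
  cases hp with
  | input hYt' hpt' hMp =>
    -- the state equation at `p` would give `M0 p = Y t - Y t' < 0`
    have h := hbal p
    rw [hAMG.sum_inc_mul_of_not_mem hpR hpt', hAMG.placePre_eq_singleton hpR hpt,
      Finset.sum_singleton, hMp, hYt] at h
    omega
  | succ hp' hp't' ht'p _ =>
    have ht' := hAMG.placePre_eq_singleton hpR hpt ▸ mem_placePre.2 ht'p
    exact ⟨_, hp', Finset.mem_singleton.1 ht' ▸ hp't'⟩

variable (hlive : N.live M0)
  (hsiph : ∀ D : Finset P, N.isMinSiphon D → N.inducedConservative D)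
include hlive hsiph

theorem isAMG.exists_pos_of_isMinSiphon (hAMG : N.isAMG M0 R) {D : Finset P}
    (hD : N.isMinSiphon D) (hM : N.potReach M0 M) : ∃ p ∈ D, 0 < M p := by
  obtain ⟨p, hp⟩ := hD.1
  obtain ⟨t, ht⟩ := hAMG.exists_consumer p
  obtain ⟨M₁, hM₁, ht₁⟩ := hlive t M0 (reachable_refl M0)
  exact (hsiph D hD).exists_pos_of_potReach (potReach_of_reachable hM₁) hM
    ⟨p, hp, ht.trans_le (ht₁ p)⟩

theorem isAMG.exists_enabled_of_stateEq (hAMG : N.isAMG M0 R) (hM : N.potReach M0 M)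
    (hbal : N.StateEq M Y M0) (hY : ∃ t, 0 < Y t) : ∃ t, 0 < Y t ∧ N.enabled M t := by
  by_contra! hstuck
  obtain ⟨t, hYt⟩ := hY
  obtain ⟨p, hp, -⟩ := exists_blocked_input hAMG.1 hYt (hstuck t hYt)
  obtain ⟨D, hDsub, hDmin⟩ := exists_isMinSiphon_subset ⟨p, by simpa using hp⟩
    (hAMG.isSiphon_blocked hbal hstuck)
  obtain ⟨q, hqD, hq⟩ := hAMG.exists_pos_of_isMinSiphon hlive hsiph hDmin hM
  have hqb : N.Blocked M Y q := by simpa using hDsub hqD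
  exact hq.ne' hqb.eq_zero

theorem isAMG.reachable_of_stateEq (hAMG : N.isAMG M0 R) (hM : N.potReach M0 M)
    (hbal : N.StateEq M Y M0) : N.reachable M M0 := by
  obtain ⟨n, hn⟩ : ∃ n, ∑ t, Y t = n := ⟨_, rfl⟩
  induction n using Nat.strong_induction_on generalizing M Y with
  | _ n ih =>
  by_cases hY : ∃ t, 0 < Y t
  · obtain ⟨t, hYt, hen⟩ := hAMG.exists_enabled_of_stateEq hlive hsiph hM hbal hY
    have hsplit : Pi.single t 1 + (Y - Pi.single t 1) = Y := by
      ext t'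
      by_cases h : t' = t
      · subst h
        simp only [Pi.add_apply, Pi.sub_apply, Pi.single_eq_same]
        omega
      · simp [h]
    have hfire := stateEq_fire hen
    rw [← hsplit] at hbal hn
    simp only [Pi.add_apply, Finset.sum_add_distrib, Finset.sum_pi_single', Finset.mem_univ,
      if_true] at hn
    obtain ⟨σ, hσ⟩ := ih _ (by omega) (potReach_trans hM ⟨_, hfire⟩)
      (hbal.cancel_left hfire) rfl
    exact ⟨t :: σ, hen, hσ⟩
  · obtain rfl : Y = 0 := funext fun t => Nat.eq_zero_of_not_pos fun h => hY ⟨t, h⟩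
    rw [stateEq_zero_iff.1 hbal]
    exact reachable_refl M

theorem isAMG.reachable_of_potReach (hAMG : N.isAMG M0 R) (hM : N.potReach M0 M) :
    N.reachable M M0 := by
  obtain ⟨Y, hY⟩ := hM
  -- since the all-ones vector is a T-invariant, `M0 = M + I·(k - Y)` for `k = max Y`
  have hk : ∀ t, Y t ≤ Finset.univ.sup Y := fun t => Finset.le_sup (Finset.mem_univ t)
  refine hAMG.reachable_of_stateEq hlive hsiph ⟨Y, hY⟩ (Y := fun t => Finset.univ.sup Y - Y t)
    fun p => ?_
  simp only [hY p, Nat.cast_sub (hk _), mul_sub, Finset.sum_sub_distrib, ← Finset.sum_mul,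
    hAMG.sum_inc_eq_zero p, zero_mul]
  ring

end AugmentedMarkedGraph

end PetriNet

/-- A live AMG in which every minimal siphon induces a conservative P-subnet is
strongly live. -/
theorem stmt12 {Q T : Type} [Fintype Q] [Fintype T]
    (N : PetriNet Q T) (M0 : Q → ℕ) (R : Finset Q)
    (hAMG : N.isAMG M0 R) (hlive : N.live M0)
    (hsiph : ∀ D : Finset Q, N.isMinSiphon D → N.inducedConservative D) :
    ∀ M : Q → ℕ, N.potReach M0 M → N.live M := by
  intro M hM t M₁ hM₁
  have hhome : N.reachable M₁ M0 := hAMG.reachable_of_potReach hlive hsiph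
    (PetriNet.potReach_trans hM (PetriNet.potReach_of_reachable hM₁))
  obtain ⟨M₂, hM₂, ht⟩ := hlive t M0 (PetriNet.reachable_refl M0)
  exact ⟨M₂, PetriNet.reachable_trans hhome hM₂, ht⟩
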